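/- arXiv:2503.10381 — 2 statements merged into one kernel-verified Lean document; each statement's English description precedes it below -/
import Mathlib

section
/- Let q_n denote continuants. For all positive integers a_1,…,a_{n+k}: 1 ≤ q_{n+k}(a_1,…,a_{n+k}) / (q_n(a_1,…,a_n) · q_k(a_{n+1},…,a_{n+k})) ≤ 2. -/
noncomputable def gaussMap (x : ℝ) : ℝ := if x = 0 then 0 else 1/x - ⌊1/x⌋

noncomputable def cfA (n : ℕ) (x : ℝ) : ℕ := ⌊1 / (gaussMap^[n] x)⌋₊

def K : List ℕ → ℕ
  | [] => 1
  | [a] => a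
  | a :: b :: l => a * K (b :: l) + K l

def cylinder (l : List ℕ) : Set ℝ :=
  {x | x ∈ Set.Ico (0:ℝ) 1 ∧ ∀ i, i < l.length → cfA i x = l.getD i 0}

noncomputable def hContent (t : ℝ) (A : Set ℝ) : ENNReal :=
  ⨅ (c : ℕ → Set ℝ) (_ : A ⊆ ⋃ i, c i) (_ : ∀ i, ∃ x r, c i = Metric.ball x r),
    ∑' i, EMetric.diam (c i) ^ t

/-! Splitting `a₁ … aₙ b₁ … bₖ` after `aₙ`, the continuant is
`q(a₁ … aₙ) q(b₁ … bₖ) + q(a₁ … aₙ₋₁) q(b₂ … bₖ)`. The second term is nonnegative and, for positive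
entries, at most the first, since deleting the last or the first entry does not increase a
continuant. -/

/-- The continuant `K (l.dropLast)` of a nonempty list (and `0` for `[]`), defined by the same
recurrence as `K` with shifted initial values, so that inductions along `K.induct` cover both. -/
def prevK : List ℕ → ℕ
  | [] => 0
  | [_] => 1
  | a :: b :: l => a * prevK (b :: l) + prevK l

theorem K_pos {l : List ℕ} (h : ∀ a ∈ l, 0 < a) : 0 < K l := by
  induction l using K.induct with
  | case1 => simp [K]
  | case2 a => exact h a (by simp)
  | case3 a b l ih _ =>
    simp only [K]
    have := ih fun x hx => h x (List.mem_cons_of_mem a hx)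
    have := h a (by simp)
    positivity

theorem prevK_le_K {l : List ℕ} (h : ∀ a ∈ l, 0 < a) : prevK l ≤ K l := by
  induction l using K.induct with
  | case1 => simp [prevK, K]
  | case2 a => exact h a (by simp)
  | case3 a b l ih₁ ih₂ =>
    simp only [prevK, K]
    gcongr
    · exact ih₁ fun x hx => h x (List.mem_cons_of_mem a hx)
    · exact ih₂ fun x hx => h x (by simp [hx])

theorem K_tail_le_K {l : List ℕ} (h : ∀ a ∈ l, 0 < a) : K l.tail ≤ K l := by
  match l with
  | [] => simp
  | [a] => exact h a (by simp)
  | a :: b :: l =>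
    simp only [List.tail_cons, K]
    have := h a (by simp)
    calc K (b :: l) ≤ a * K (b :: l) := Nat.le_mul_of_pos_left _ this
      _ ≤ a * K (b :: l) + K l := Nat.le_add_right _ _

theorem K_append_cons (l₁ l : List ℕ) (b : ℕ) :
    K (l₁ ++ b :: l) = K l₁ * K (b :: l) + prevK l₁ * K l := by
  induction l₁ using K.induct with
  | case1 => simp [K, prevK]
  | case2 a => simp [K, prevK]
  | case3 a c l₁ ih₁ ih₂ =>
    rw [List.cons_append, List.cons_append, K, ← List.cons_append, ih₁, ih₂]
    simp only [K, prevK]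
    ring

theorem K_mul_le_K_append (l₁ l₂ : List ℕ) : K l₁ * K l₂ ≤ K (l₁ ++ l₂) := by
  match l₂ with
  | [] => simp [K]
  | b :: l => rw [K_append_cons]; exact Nat.le_add_right _ _

theorem K_append_le_two_mul {l₁ l₂ : List ℕ} (h₁ : ∀ a ∈ l₁, 0 < a) (h₂ : ∀ a ∈ l₂, 0 < a) :
    K (l₁ ++ l₂) ≤ 2 * (K l₁ * K l₂) := by
  match l₂ with
  | [] => simp [K, two_mul]
  | b :: l =>
    rw [K_append_cons, two_mul]
    gcongr
    · exact prevK_le_K h₁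
    · exact K_tail_le_K h₂

theorem continuant_quasi_mul (l₁ l₂ : List ℕ) (h₁ : ∀ a ∈ l₁, 0 < a)
    (h₂ : ∀ a ∈ l₂, 0 < a) :
    1 ≤ (K (l₁ ++ l₂) : ℝ) / ((K l₁ : ℝ) * (K l₂ : ℝ)) ∧
    (K (l₁ ++ l₂) : ℝ) / ((K l₁ : ℝ) * (K l₂ : ℝ)) ≤ 2 := by
  have hpos : (0 : ℝ) < (K l₁ : ℝ) * K l₂ := by
    have := K_pos h₁
    have := K_pos h₂
    positivity
  rw [le_div_iff₀ hpos, div_le_iff₀ hpos, one_mul]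
  exact ⟨by exact_mod_cast K_mul_le_K_append l₁ l₂,
    by exact_mod_cast K_append_le_two_mul h₁ h₂⟩
end

section
/- Fix n ≥ 1 and define f(s) = Σ_{a_1,…,a_n ∈ ℕ⁺} q_n(a_1,…,a_n)^{−2s} for s > 1/2. Then f is continuous on (1/2, ∞) and f(s) → ∞ as s ↓ 1/2. -/
/-!
Since every `aᵢ ≥ 1`, the recursion for `K` gives `∏ aᵢ ≤ K a ≤ 2ⁿ ∏ aᵢ`. The lower bound
dominates the series termwise by `ζ(2s)ⁿ`, locally uniformly in `s > 1/2`, which gives continuity.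
The upper bound along `a = (m, 1, …, 1)` shows that the series diverges at `s = 1/2`; as each term
is continuous in `s`, finite partial sums, hence the series, exceed any bound as `s ↓ 1/2`.
-/

open Filter Set Topology

lemma K_le_K_cons {b : ℕ} (hb : 1 ≤ b) : ∀ l : List ℕ, K l ≤ K (b :: l)
  | [] => hb
  | _ :: _ => Nat.le_add_right_of_le (Nat.le_mul_of_pos_left _ hb)

lemma prod_le_K : ∀ l : List ℕ, l.prod ≤ K l
  | [] => le_rfl
  | [a] => by simp [K]
  | a :: b :: l => Nat.le_add_right_of_le (Nat.mul_le_mul_left a (prod_le_K (b :: l)))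

lemma K_le_two_pow_length_mul_prod : ∀ l : List ℕ, (∀ a ∈ l, 1 ≤ a) →
    K l ≤ 2 ^ l.length * l.prod
  | [] => fun _ => le_rfl
  | [a] => fun _ => by simp [K]; omega
  | a :: b :: l => fun hl => by
    have ha : 1 ≤ a := hl a (by simp)
    have ih := K_le_two_pow_length_mul_prod (b :: l) fun x hx => hl x (by simp [hx])
    have hK := K_le_K_cons (hl b (by simp)) l
    calc a * K (b :: l) + K l ≤ 2 * a * K (b :: l) := by nlinarith
      _ ≤ 2 * a * (2 ^ (b :: l).length * (b :: l).prod) := Nat.mul_le_mul_left _ ih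
      _ = 2 ^ (a :: b :: l).length * (a :: b :: l).prod := by
        simp only [List.length_cons, List.prod_cons, pow_succ]; ring

lemma summable_pi_fin_prod {α : Type*} {f : α → ℝ} (hf₀ : ∀ x, 0 ≤ f x) (hf : Summable f) :
    ∀ n : ℕ, Summable fun a : Fin n → α => ∏ i, f (a i)
  | 0 => .of_finite
  | n + 1 => by
    rw [← (Fin.consEquiv fun _ => α).summable_iff]
    refine (hf.mul_of_nonneg (summable_pi_fin_prod hf₀ hf n) hf₀
      fun a => Finset.prod_nonneg fun i _ => hf₀ (a i)).congr fun x => ?_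
    simp [Fin.prod_univ_succ]

section Continuant

variable {n : ℕ}

def continuant (a : Fin n → ℕ+) : ℕ := K (List.ofFn fun i => (a i : ℕ))

lemma prod_le_continuant (a : Fin n → ℕ+) : ∏ i, (a i : ℕ) ≤ continuant a := by
  simpa [continuant, List.prod_ofFn] using prod_le_K (List.ofFn fun i => (a i : ℕ))

lemma continuant_le_two_pow_mul_prod (a : Fin n → ℕ+) :
    continuant a ≤ 2 ^ n * ∏ i, (a i : ℕ) := by
  simpa [continuant, List.prod_ofFn] using
    K_le_two_pow_length_mul_prod (List.ofFn fun i => (a i : ℕ))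
      (by simp [List.mem_ofFn, Nat.one_le_iff_ne_zero])

lemma one_le_continuant (a : Fin n → ℕ+) : 1 ≤ continuant a :=
  (Finset.prod_pos fun i _ => (a i).pos).trans_le (prod_le_continuant a)

lemma summable_continuant_rpow_neg {t : ℝ} (ht : 1 < t) :
    Summable fun a : Fin n → ℕ+ => (continuant a : ℝ) ^ (-t) := by
  have hζ : Summable fun m : ℕ+ => ((m : ℕ) : ℝ) ^ (-t) :=
    summable_pnat_iff_summable_nat.2 (Real.summable_nat_rpow.2 (by linarith))
  refine (summable_pi_fin_prod (fun _ => by positivity) hζ n).of_nonneg_of_le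
    (fun _ => by positivity) fun a => ?_
  rw [Real.finsetProd_rpow _ _ fun _ _ => by positivity]
  exact Real.rpow_le_rpow_of_nonpos (by positivity) (mod_cast prod_le_continuant a) (by linarith)

lemma not_summable_continuant_inv (i₀ : Fin n) :
    ¬ Summable fun a : Fin n → ℕ+ => (continuant a : ℝ)⁻¹ := by
  intro h
  have hprod (m : ℕ+) : ∏ i, ((Pi.mulSingle i₀ m : Fin n → ℕ+) i : ℕ) = m := by
    rw [← PNat.coe_coeMonoidHom, ← map_prod, Finset.prod_pi_mulSingle', if_pos (Finset.mem_univ _)]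
  have hharm : Summable fun m : ℕ+ => ((m : ℕ) : ℝ)⁻¹ := by
    refine ((h.comp_injective (Pi.mulSingle_injective i₀)).mul_left (2 ^ n)).of_nonneg_of_le
      (fun _ => by positivity) fun m => ?_
    have hle : (continuant (Pi.mulSingle i₀ m) : ℝ) ≤ 2 ^ n * (m : ℕ) := by
      exact_mod_cast hprod m ▸ continuant_le_two_pow_mul_prod (Pi.mulSingle i₀ m)
    have hpos : (0 : ℝ) < continuant (Pi.mulSingle i₀ m) := mod_cast one_le_continuant _
    calc ((m : ℕ) : ℝ)⁻¹ = 2 ^ n * (2 ^ n * ((m : ℕ) : ℝ))⁻¹ := by field_simp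
      _ ≤ 2 ^ n * (continuant (Pi.mulSingle i₀ m) : ℝ)⁻¹ := by gcongr
  exact Real.not_summable_natCast_inv (summable_pnat_iff_summable_nat.1 hharm)

end Continuant

lemma continuousOn_tsum_rpow_neg {ι : Type*} {c : ι → ℝ} (hc : ∀ i, 1 ≤ c i) {σ : ℝ}
    (hsum : ∀ t, σ < t → Summable fun i => c i ^ (-t)) :
    ContinuousOn (fun t => ∑' i, c i ^ (-t)) (Ioi σ) := by
  intro t ht
  obtain ⟨t₀, hσt₀, ht₀t⟩ := exists_between (α := ℝ) ht
  have hcont : ContinuousOn (fun t => ∑' i, c i ^ (-t)) (Ioi t₀) := by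
    refine continuousOn_tsum (fun i => ?_) (hsum t₀ hσt₀) fun i t ht => ?_
    · exact (Real.continuous_const_rpow (zero_lt_one.trans_le (hc i)).ne').comp_continuousOn
        continuousOn_neg
    · rw [Real.norm_of_nonneg (Real.rpow_nonneg (zero_le_one.trans (hc i)) _)]
      exact Real.rpow_le_rpow_of_exponent_le (hc i) (neg_le_neg (le_of_lt ht))
  exact (hcont.continuousAt (Ioi_mem_nhds ht₀t)).continuousWithinAt

lemma tendsto_tsum_atTop_of_not_summable {ι : Type*} {f : ι → ℝ → ℝ} {x₀ : ℝ} {l : Filter ℝ}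
    (hl : l ≤ 𝓝 x₀) (hf₀ : ∀ i x, 0 ≤ f i x) (hf : ∀ i, ContinuousAt (f i) x₀)
    (hsum : ∀ᶠ x in l, Summable fun i => f i x) (hdiv : ¬ Summable fun i => f i x₀) :
    Tendsto (fun x => ∑' i, f i x) l atTop := by
  refine tendsto_atTop.2 fun M => ?_
  obtain ⟨u, hu⟩ : ∃ u : Finset ι, M < ∑ i ∈ u, f i x₀ := by
    by_contra! h
    exact hdiv (summable_of_sum_le (fun i => hf₀ i x₀) h)
  have hu_cont : Tendsto (fun x => ∑ i ∈ u, f i x) (𝓝 x₀) (𝓝 (∑ i ∈ u, f i x₀)) :=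
    tendsto_finsetSum u fun i _ => hf i
  filter_upwards [hl (hu_cont.eventually (lt_mem_nhds hu)), hsum] with x hxM hx
  exact hxM.le.trans (hx.sum_le_tsum u fun i _ => hf₀ i x)

theorem continuant_series_continuous_and_blowup (n : ℕ) (hn : 1 ≤ n) :
    ContinuousOn (fun s : ℝ => ∑' a : Fin n → ℕ+,
        ((K (List.ofFn fun i => (a i : ℕ)) : ℝ)) ^ (-(2 * s))) (Set.Ioi (1/2)) ∧
    Filter.Tendsto (fun s : ℝ => ∑' a : Fin n → ℕ+,
        ((K (List.ofFn fun i => (a i : ℕ)) : ℝ)) ^ (-(2 * s)))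
      (nhdsWithin (1/2) (Set.Ioi (1/2))) Filter.atTop := by
  have hc (a : Fin n → ℕ+) : (1 : ℝ) ≤ continuant a := mod_cast one_le_continuant a
  have hne (a : Fin n → ℕ+) : (continuant a : ℝ) ≠ 0 := (zero_lt_one.trans_le (hc a)).ne'
  constructor
  · refine (continuousOn_tsum_rpow_neg hc fun t ht => summable_continuant_rpow_neg ht).comp
      (continuousOn_const.mul continuousOn_id) fun s hs => ?_
    simp only [mem_Ioi] at hs ⊢
    linarith
  · refine tendsto_tsum_atTop_of_not_summable nhdsWithin_le_nhds (fun a s => by positivity)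
      (fun a => (Real.continuousAt_const_rpow (hne a)).comp (by fun_prop)) ?_ ?_
    · filter_upwards [self_mem_nhdsWithin] with s hs
      exact summable_continuant_rpow_neg (by simp only [mem_Ioi] at hs; linarith)
    · simpa [continuant, Real.rpow_neg_one] using not_summable_continuant_inv (⟨0, hn⟩ : Fin n)
end
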